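/- arXiv:2111.03968 — 8 statements merged into one kernel-verified Lean document; each statement's English description precedes it below -/
import Mathlib

section
/- Any string s with periodicities a and b such that |s| ≥ a + b has periodicity gcd(a, b). Here a string s has periodicity a (for a ≤ |s|) if s is a prefix of x^∞ for some string x of length a. -/
/-- A string `s` has periodicity `p` if `s[i] = s[i+p]` for all valid indices
(equivalently, `s` is a prefix of `x^∞` for some string `x` of length `p`, when `p ≥ 1`). -/
def hasPeriod {α : Type*} (s : List α) (p : ℕ) : Prop :=
  ∀ i, i + p < s.length → s[i]? = s[i + p]?

lemma hasPeriod_sub {α : Type*} (s : List α) (a b : ℕ) (hba : b ≤ a)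
    (ha : hasPeriod s a) (hb : hasPeriod s b) (hlen : a + b ≤ s.length) :
    hasPeriod s (a - b) := by
  intro i hi
  by_cases h : i + a < s.length
  · have h1 := ha i h
    have h2 := hb (i + a - b) (by omega)
    rw [show i + a - b + b = i + a by omega] at h2
    rw [h1, ← h2, show i + a - b = i + (a - b) by omega]
  · have h1 := hb (i - b) (by omega)
    have h2 := ha (i - b) (by omega)
    rw [show i - b + b = i by omega] at h1
    rw [show i - b + a = i + (a - b) by omega] at h2
    rw [← h1, h2]

lemma periodicity_gcd_aux {α : Type*} :
    ∀ n (s : List α) (a b : ℕ), a + b = n → hasPeriod s a → hasPeriod s b →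
      a + b ≤ s.length → hasPeriod s (Nat.gcd a b) := by
  intro n
  induction n using Nat.strong_induction_on with
  | _ n ih =>
    intro s a b hn ha hb hlen
    rcases Nat.eq_zero_or_pos b with hb0 | hb0
    · subst hb0; simpa using ha
    rcases Nat.eq_zero_or_pos a with ha0 | ha0
    · subst ha0; simpa using hb
    rcases le_total b a with h | h
    · have hs := hasPeriod_sub s a b h ha hb hlen
      have := ih (a - b + b) (by omega) s (a - b) b rfl hs hb (by omega)
      rwa [Nat.gcd_sub_self_left h] at this
    · have hs := hasPeriod_sub s b a h hb ha (by omega)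
      have := ih (b - a + a) (by omega) s (b - a) a rfl hs ha (by omega)
      rwa [Nat.gcd_sub_self_left h, Nat.gcd_comm] at this

/-- Fine–Wilf: any string with periodicities `a` and `b` and length at least `a + b`
has periodicity `gcd a b`. -/
theorem periodicity_gcd {α : Type*} (s : List α) (a b : ℕ)
    (ha : hasPeriod s a) (hb : hasPeriod s b) (hlen : a + b ≤ s.length) :
    hasPeriod s (Nat.gcd a b) := by
  exact periodicity_gcd_aux (a + b) s a b rfl ha hb hlen
end

section
/- The distance function dist satisfies the triangle inequality: for any strings s, t, t', dist(s,t) ≤ dist(s,t') + dist(t',t). -/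
/-- `ovLen s t` is the length of `ov(s,t)`, the longest suffix of `s`
that is also a prefix of `t`. -/
def ovLen {α : Type*} [DecidableEq α] (s t : List α) : ℕ :=
  Nat.findGreatest (fun k => k ≤ t.length ∧ s.drop (s.length - k) = t.take k) s.length

/-- `distL s t = |s| − |ov(s,t)|`. -/
def distL {α : Type*} [DecidableEq α] (s t : List α) : ℕ := s.length - ovLen s t

lemma ovLen_le_left {α : Type*} [DecidableEq α] (s t : List α) : ovLen s t ≤ s.length :=
  Nat.findGreatest_le _

lemma ovLen_spec {α : Type*} [DecidableEq α] (s t : List α) :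
    ovLen s t ≤ t.length ∧ s.drop (s.length - ovLen s t) = t.take (ovLen s t) :=
  Nat.findGreatest_spec (P := fun k => k ≤ t.length ∧ s.drop (s.length - k) = t.take k)
    (Nat.zero_le _) (by simp)

lemma le_ovLen {α : Type*} [DecidableEq α] {s t : List α} {k : ℕ} (h1 : k ≤ s.length)
    (h2 : k ≤ t.length) (h3 : s.drop (s.length - k) = t.take k) : k ≤ ovLen s t :=
  Nat.le_findGreatest h1 ⟨h2, h3⟩

/-- The distance function satisfies the triangle inequality:
`dist(s,t) ≤ dist(s,t') + dist(t',t)`. -/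
theorem distL_triangle {α : Type*} [DecidableEq α] (s t t' : List α) :
    distL s t ≤ distL s t' + distL t' t := by
  have ha := ovLen_spec s t'
  have hb := ovLen_spec t' t
  have has := ovLen_le_left s t'
  have hbs := ovLen_le_left t' t
  have hov := ovLen_le_left s t
  set a := ovLen s t'
  set b := ovLen t' t
  unfold distL
  by_cases hc : a + b ≤ t'.length
  · omega
  · set k := a + b - t'.length with hkdef
    have key : s.drop (s.length - k) = t.take k := by
      have h1 : s.drop (s.length - k) = (s.drop (s.length - a)).drop (a - k) := by
        rw [List.drop_drop]
        congr 1
        omega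
      rw [h1, ha.2]
      have h2 : a - k = t'.length - b := by omega
      rw [h2, List.drop_take, hb.2]
      have h3 : a - (t'.length - b) = k := by omega
      rw [h3, List.take_take]
      congr 1
      omega
    have hP : k ≤ ovLen s t := le_ovLen (by omega) (by omega) key
    omega
end

section
/- For any two inequivalent strings s and t, |ov(s,t)| < period(s) + period(t). -/
/-- `periodN s` is the smallest positive periodicity of `s`, i.e. `|pref(s,s)|`. -/
noncomputable def periodN {α : Type*} (s : List α) : ℕ :=
  sInf {p | 0 < p ∧ hasPeriod s p}

section Aux

variable {α : Type*}

lemma hasPeriod_mul {s : List α} {p : ℕ} (h : hasPeriod s p) :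
    ∀ (c i : ℕ), i + c * p < s.length → s[i]? = s[i + c * p]? := by
  intro c
  induction c with
  | zero => simp
  | succ c ih =>
    intro i hlt
    have h1 : i + c * p < s.length := by nlinarith [Nat.succ_mul c p]
    have h2 : (i + c * p) + p < s.length := by
      have : i + (c+1) * p = (i + c * p) + p := by ring
      omega
    rw [ih i h1, h (i + c * p) h2]
    congr 1
    ring

lemma hasPeriod_mod {s : List α} {p : ℕ} (h : hasPeriod s p) (hp : 0 < p)
    {i : ℕ} (hi : i < s.length) : s[i]? = s[i % p]? := by
  have := hasPeriod_mul h (i / p) (i % p) (by rw [Nat.mod_add_div']; exact hi)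
  rw [Nat.mod_add_div'] at this
  exact this.symm

lemma hasPeriod_take {s : List α} {p : ℕ} (h : hasPeriod s p) (k : ℕ) :
    hasPeriod (s.take k) p := by
  intro i hlt
  rw [List.length_take] at hlt
  have h1 : i < k := by omega
  have h2 : i + p < k := by omega
  rw [List.getElem?_take, List.getElem?_take, if_pos h1, if_pos h2]
  exact h i (by omega)

lemma hasPeriod_drop {s : List α} {p : ℕ} (h : hasPeriod s p) (m : ℕ) :
    hasPeriod (s.drop m) p := by
  intro i hlt
  rw [List.length_drop] at hlt
  rw [List.getElem?_drop, List.getElem?_drop]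
  have := h (m + i) (by omega)
  rw [this]
  congr 1
  omega

/-- Weak Fine–Wilf step: periods `p < q` give period `q - p`. -/
lemma fw_step {s : List α} {p q : ℕ} (hp : 0 < p) (hpq : p < q)
    (h1 : hasPeriod s p) (h2 : hasPeriod s q) (hlen : p + q ≤ s.length) :
    hasPeriod s (q - p) := by
  intro i hlt
  by_cases hc : i + q < s.length
  · have e1 := h2 i hc
    have e2 := h1 (i + (q - p)) (by omega)
    rw [e1, e2]
    congr 1
    omega
  · have hip : p ≤ i := by omega
    have e1 := h1 (i - p) (by omega)
    have e2 := h2 (i - p) (by omega)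
    rw [show i - p + p = i by omega] at e1
    rw [show i - p + q = i + (q - p) by omega] at e2
    rw [← e1, e2]

/-- Weak Fine–Wilf theorem. -/
lemma fineWilf : ∀ (n p q : ℕ) (s : List α), p + q ≤ n → 0 < p → 0 < q →
    hasPeriod s p → hasPeriod s q → p + q ≤ s.length → hasPeriod s (Nat.gcd p q) := by
  intro n
  induction n using Nat.strong_induction_on with
  | _ n ih =>
    intro p q s hn hp hq h1 h2 hlen
    rcases lt_trichotomy p q with h | h | h
    · have hstep := fw_step hp h h1 h2 hlen
      have := ih (p + (q - p)) (by omega) p (q - p) s (by omega) hp (by omega) h1 hstep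
        (by omega)
      rwa [Nat.gcd_sub_self_right (le_of_lt h)] at this
    · subst h
      rwa [Nat.gcd_self]
    · have hstep := fw_step hq h h2 h1 (by omega)
      have := ih (q + (p - q)) (by omega) q (p - q) s (by omega) hq (by omega) h2 hstep
        (by omega)
      rwa [Nat.gcd_sub_self_right (le_of_lt h), Nat.gcd_comm] at this

/-- A period of a long enough suffix propagates leftwards along a period of `s`. -/
lemma propagate_of_drop {s : List α} {p d m : ℕ} (hp : hasPeriod s p) (hp0 : 0 < p)
    (hd : hasPeriod (s.drop m) d) (hlen : m + p + d ≤ s.length) : hasPeriod s d := by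
  have key : ∀ (n i : ℕ), m - i ≤ n → i + d < s.length → s[i]? = s[i + d]? := by
    intro n
    induction n with
    | zero =>
      intro i hni hi
      have him : m ≤ i := by omega
      have := hd (i - m) (by rw [List.length_drop]; omega)
      rw [List.getElem?_drop, List.getElem?_drop] at this
      rw [show m + (i - m) = i by omega, show m + (i - m + d) = i + d by omega] at this
      exact this
    | succ n ihn =>
      intro i hni hi
      by_cases him : m ≤ i
      · have := hd (i - m) (by rw [List.length_drop]; omega)
        rw [List.getElem?_drop, List.getElem?_drop] at this
        rw [show m + (i - m) = i by omega, show m + (i - m + d) = i + d by omega] at this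
        exact this
      · have e1 := hp i (by omega)
        have e2 := hp (i + d) (by omega)
        have e3 := ihn (i + p) (by omega) (by omega)
        rw [e1, e3, e2]
        congr 1
        omega
  intro i hi
  exact key (m - i) i le_rfl hi

/-- A period of a long enough prefix propagates rightwards along a period of `t`. -/
lemma propagate_of_take {t : List α} {q d k : ℕ} (hq : hasPeriod t q) (hq0 : 0 < q)
    (hd : hasPeriod (t.take k) d) (hlen : q + d ≤ k) (hk : k ≤ t.length) : hasPeriod t d := by
  have key : ∀ (i : ℕ), i + d < t.length → t[i]? = t[i + d]? := by
    intro i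
    induction i using Nat.strong_induction_on with
    | _ i ihi =>
      intro hi
      by_cases hc : i + d < k
      · have := hd i (by rw [List.length_take]; omega)
        rwa [List.getElem?_take, List.getElem?_take, if_pos (by omega), if_pos hc] at this
      · have hiq : q ≤ i := by omega
        have e1 := hq (i - q) (by omega)
        have e2 := hq (i - q + d) (by omega)
        have e3 := ihi (i - q) (by omega) (by omega)
        rw [show i = (i - q) + q by omega, ← e1, e3, e2]
        congr 1
        omega
  exact key

lemma periodN_mem {s : List α} : 0 < periodN s ∧ hasPeriod s (periodN s) := by
  have hne : {p | 0 < p ∧ hasPeriod s p}.Nonempty := by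
    refine ⟨s.length + 1, Nat.succ_pos _, fun i hi => absurd hi (by omega)⟩
  exact Nat.sInf_mem hne

end Aux

/-- For any two inequivalent strings `s` and `t` (i.e. `pref(t,t)` is not a rotation of
`pref(s,s)`), it holds that `|ov(s,t)| < period(s) + period(t)`. -/
theorem ov_lt_period_add_period_of_inequivalent {α : Type*} [DecidableEq α] (s t : List α)
    (hineq : ¬ (s.take (periodN s) ~r t.take (periodN t))) :
    ovLen s t < periodN s + periodN t := by
  by_contra hcon
  push_neg at hcon
  set p := periodN s with hpdef
  set q := periodN t with hqdef
  set k := ovLen s t with hkdef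
  obtain ⟨hp0, hps⟩ := periodN_mem (s := s)
  obtain ⟨hq0, hqt⟩ := periodN_mem (s := t)
  -- basic facts about k
  have hks : k ≤ s.length := Nat.findGreatest_le _
  have hspec : k ≤ t.length ∧ s.drop (s.length - k) = t.take k := by
    rw [hkdef, ovLen]
    exact Nat.findGreatest_spec (P := fun k => k ≤ t.length ∧ s.drop (s.length - k) = t.take k)
      (Nat.zero_le _) ⟨Nat.zero_le _, by simp⟩
  obtain ⟨hkt, hov⟩ := hspec
  have hpqk : p + q ≤ k := hcon
  -- the overlap u
  set u := t.take k with hudef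
  have hulen : u.length = k := by rw [hudef, List.length_take]; omega
  have huq : hasPeriod u q := hasPeriod_take hqt k
  have hup : hasPeriod u p := hov ▸ hasPeriod_drop hps (s.length - k)
  set d := Nat.gcd p q with hddef
  have hd0 : 0 < d := Nat.gcd_pos_of_pos_left _ hp0
  have hdp : d ≤ p := Nat.le_of_dvd hp0 (Nat.gcd_dvd_left _ _)
  have hdq : d ≤ q := Nat.le_of_dvd hq0 (Nat.gcd_dvd_right _ _)
  have hud : hasPeriod u d := fineWilf (p + q) p q u le_rfl hp0 hq0 hup huq (by omega)
  -- s has period d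
  have hsd : hasPeriod s d := by
    refine propagate_of_drop hps hp0 (hov ▸ hud) ?_
    omega
  have htd : hasPeriod t d := propagate_of_take hqt hq0 hud (by omega) hkt
  have hpd : p = d := le_antisymm (Nat.sInf_le ⟨hd0, hsd⟩) hdp
  have hqd : q = d := le_antisymm (Nat.sInf_le ⟨hd0, htd⟩) hdq
  -- now build the rotation
  apply hineq
  have hpq : p = q := by omega
  set m := s.length - k with hmdef
  refine ⟨m % p, ?_⟩
  have hlen1 : (s.take p).length = p := by rw [List.length_take]; omega
  have hlen2 : (t.take q).length = q := by rw [List.length_take]; omega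
  apply List.ext_getElem?
  intro j
  by_cases hj : j < p
  · rw [List.getElem?_rotate (by rwa [hlen1]), hlen1]
    have hjr : (j + m % p) % p < p := Nat.mod_lt _ hp0
    rw [List.getElem?_take, if_pos hjr, List.getElem?_take, if_pos (by omega)]
    -- t[j]? = u[j]? = s[m + j]?
    have ht_u : t[j]? = u[j]? := by
      rw [hudef, List.getElem?_take, if_pos (by omega)]
    have hu_s : u[j]? = s[m + j]? := by
      rw [← hov, List.getElem?_drop]
    have hs1 : s[m + j]? = s[(m + j) % p]? := by
      rw [hpd]; exact hasPeriod_mod hsd hd0 (by omega)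
    have hs2 : (j + m % p) % p = (m + j) % p := by
      rw [Nat.add_mod_mod, Nat.add_comm]
    rw [hs2, ht_u, hu_s, hs1]
  · have h1 : ((s.take p).rotate (m % p))[j]? = none := by
      rw [List.getElem?_eq_none]
      rw [List.length_rotate, hlen1]; omega
    have h2 : (t.take q)[j]? = none := by
      rw [List.getElem?_eq_none]; omega
    rw [h1, h2]
end

section
/- Let x1 and x2 be nonempty strings. If a string h is a substring of both x1^∞ and x2^∞ and |h| ≥ |x1| + |x2|, then x1^∞ and x2^∞ have a common rotation structure: there exist rotations y1 of x1 and y2 of x2 such that y1^∞ = y2^∞ (equivalently, y1 y2 = y2 y1). -/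
/-- `infWordO x` models the semi-infinite string `x^∞` (for nonempty `x`):
its `n`-th character is `x[n mod |x|]`. -/
def infWordO {α : Type*} (x : List α) : ℕ → Option α := fun n => x[n % x.length]?

lemma infWordO_rotate {α : Type*} (x : List α) (k n : ℕ) :
    infWordO (x.rotate k) n = infWordO x (k + n) := by
  unfold infWordO
  rcases eq_or_ne x [] with rfl | hx
  · simp
  have hl : 0 < x.length := List.length_pos_iff.mpr hx
  have hrl : (x.rotate k).length = x.length := List.length_rotate x k
  have h1 : n % x.length < (x.rotate k).length := by rw [hrl]; exact Nat.mod_lt _ hl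
  rw [hrl, List.getElem?_eq_getElem h1, List.getElem?_eq_getElem (Nat.mod_lt _ hl)]
  congr 1
  rw [List.getElem_rotate]
  congr 1
  rw [Nat.mod_add_mod, Nat.add_comm]

lemma infWordO_period {α : Type*} (x : List α) (_hx : x ≠ []) (n : ℕ) :
    infWordO x (n + x.length) = infWordO x n := by
  unfold infWordO
  rw [Nat.add_mod_right]

lemma ext_of_periodic {β : Type*} (f g : ℕ → β) (n1 n2 : ℕ) (h1 : 0 < n1) (h2 : 0 < n2)
    (hf : ∀ n, f (n + n1) = f n) (hg : ∀ n, g (n + n2) = g n)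
    (hagree : ∀ i < n1 + n2, f i = g i) : f = g := by
  funext n
  induction n using Nat.strong_induction_on with
  | _ n ih =>
    by_cases hn : n < n1 + n2
    · exact hagree n hn
    · push_neg at hn
      obtain ⟨m, rfl⟩ : ∃ m, n = m + n1 + n2 := ⟨n - n1 - n2, by omega⟩
      calc f (m + n1 + n2) = f (m + n2) := by
            rw [show m + n1 + n2 = (m + n2) + n1 by ring, hf]
        _ = g (m + n2) := ih _ (by omega)
        _ = g m := hg m
        _ = f m := (ih _ (by omega)).symm
        _ = f (m + n1) := (hf m).symm
        _ = g (m + n1) := ih _ (by omega)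
        _ = g (m + n1 + n2) := (hg (m + n1)).symm

/-- If a string `h` is a substring of both `x1^∞` and `x2^∞` (occurring at positions
`p1` and `p2` respectively) and `|h| ≥ |x1| + |x2|`, then there exist rotations `y1` of
`x1` and `y2` of `x2` with `y1 y2 = y2 y1`, equivalently `y1^∞ = y2^∞`. -/
theorem common_rotation_of_long_common_substring {α : Type*} (h x1 x2 : List α)
    (hx1 : x1 ≠ []) (hx2 : x2 ≠ []) (p1 p2 : ℕ)
    (hocc1 : ∀ i < h.length, h[i]? = infWordO x1 (p1 + i))
    (hocc2 : ∀ i < h.length, h[i]? = infWordO x2 (p2 + i))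
    (hlen : x1.length + x2.length ≤ h.length) :
    ∃ y1 y2 : List α, x1 ~r y1 ∧ x2 ~r y2 ∧ y1 ++ y2 = y2 ++ y1 ∧
      infWordO y1 = infWordO y2 := by
  set n1 := x1.length with hn1def
  set n2 := x2.length with hn2def
  have hn1 : 0 < n1 := List.length_pos_iff.mpr hx1
  have hn2 : 0 < n2 := List.length_pos_iff.mpr hx2
  set y1 := x1.rotate p1 with hy1def
  set y2 := x2.rotate p2 with hy2def
  have hy1len : y1.length = n1 := List.length_rotate x1 p1
  have hy2len : y2.length = n2 := List.length_rotate x2 p2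
  have hy1ne : y1 ≠ [] := by
    intro hc; rw [hc] at hy1len; simp at hy1len; omega
  have hy2ne : y2 ≠ [] := by
    intro hc; rw [hc] at hy2len; simp at hy2len; omega
  set f := infWordO y1 with hfdef
  set g := infWordO y2 with hgdef
  have hfper : ∀ n, f (n + n1) = f n := by
    intro n
    rw [hfdef, ← hy1len]
    exact infWordO_period y1 hy1ne n
  have hgper : ∀ n, g (n + n2) = g n := by
    intro n
    rw [hgdef, ← hy2len]
    exact infWordO_period y2 hy2ne n
  have hagree : ∀ i < n1 + n2, f i = g i := by
    intro i hi
    have hih : i < h.length := lt_of_lt_of_le hi hlen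
    rw [hfdef, hgdef, hy1def, hy2def, infWordO_rotate, infWordO_rotate,
      ← hocc1 i hih, ← hocc2 i hih]
  have hfg : f = g := ext_of_periodic f g n1 n2 hn1 hn2 hfper hgper hagree
  -- pointwise values within the lists
  have hy1get : ∀ i, i < n1 → y1[i]? = f i := by
    intro i hi
    rw [hfdef]
    unfold infWordO
    rw [hy1len, Nat.mod_eq_of_lt hi]
  have hy2get : ∀ i, i < n2 → y2[i]? = g i := by
    intro i hi
    rw [hgdef]
    unfold infWordO
    rw [hy2len, Nat.mod_eq_of_lt hi]
  refine ⟨y1, y2, ⟨p1, rfl⟩, ⟨p2, rfl⟩, ?_, hfg⟩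
  apply List.ext_getElem?
  intro i
  by_cases hi : i < n1 + n2
  · have e1 : (y1 ++ y2)[i]? = f i := by
      by_cases h1 : i < n1
      · rw [List.getElem?_append_left (by omega : i < y1.length)]
        exact hy1get i h1
      · push_neg at h1
        rw [List.getElem?_append_right (by omega : y1.length ≤ i), hy1len]
        rw [hy2get (i - n1) (by omega), ← hfg]
        have := hfper (i - n1)
        rw [show i - n1 + n1 = i by omega] at this
        exact this.symm
    have e2 : (y2 ++ y1)[i]? = f i := by
      by_cases h2 : i < n2
      · rw [List.getElem?_append_left (by omega : i < y2.length)]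
        rw [hy2get i h2, ← hfg]
      · push_neg at h2
        rw [List.getElem?_append_right (by omega : y2.length ≤ i), hy2len]
        rw [hy1get (i - n2) (by omega)]
        have : g (i - n2 + n2) = g (i - n2) := hgper (i - n2)
        rw [show i - n2 + n2 = i by omega] at this
        rw [hfg]
        exact this.symm
    rw [e1, e2]
  · push_neg at hi
    rw [List.getElem?_eq_none, List.getElem?_eq_none] <;>
      simp [hy1len, hy2len] <;> omega
end

section
/- Let u, u', v' be strings where u has periodicity p with p ≤ min{|ov(v',u)|, |ov(u,u')|}. Then |ov(v',u')| > min{|ov(v',u)|, |ov(u,u')|} − p. (This is the key step in the 'small-cycle Monge' lemma: if u is a string with period at most p and both the overlap of v' into u and of u into u' have length at least p, then v' overlaps u' by more than min{|ov(v',u)|, |ov(u,u')|} − p.) -/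
private lemma hasPeriod_iter {α : Type*} {u : List α} {p : ℕ} (hper : hasPeriod u p) :
    ∀ (t i : ℕ), i + t * p < u.length → u[i]? = u[i + t * p]? := by
  intro t
  induction t with
  | zero => simp
  | succ n ih =>
    intro i h
    have he : i + (n + 1) * p = (i + n * p) + p := by ring
    have h1 : i + n * p < u.length := by omega
    have h2 : (i + n * p) + p < u.length := by omega
    calc u[i]? = u[i + n * p]? := ih i h1
      _ = u[(i + n * p) + p]? := hper _ h2
      _ = u[i + (n + 1) * p]? := by rw [he]

/-- pointwise consequence of an overlap equation -/
private lemma ov_elem {α : Type*} {s t : List α} {k : ℕ}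
    (h : s.drop (s.length - k) = t.take k) {j : ℕ} (hj : j < k) :
    s[s.length - k + j]? = t[j]? := by
  have := congrArg (fun l => l[j]?) h
  simpa [List.getElem?_drop, List.getElem?_take, hj] using this

/-- arithmetic: choosing the right multiple of the period -/
private lemma exists_T (p a N m : ℕ) (hp : 0 < p) (hpm : p ≤ m) (_hma : m ≤ a)
    (haNm : a ≤ N + m) :
    ∃ T k, (∃ t, T = t * p) ∧ N + k = a + T ∧ m + 1 ≤ k + p ∧ k ≤ m := by
  obtain ⟨q, hq⟩ : ∃ q, q = (N + m + 1 - (a + p) + p - 1) / p := ⟨_, rfl⟩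
  obtain ⟨T, hT⟩ : ∃ T, T = q * p := ⟨_, rfl⟩
  have h1 : p * q + (N + m + 1 - (a + p) + p - 1) % p = N + m + 1 - (a + p) + p - 1 := by
    rw [hq]; exact Nat.div_add_mod _ p
  have h2 : (N + m + 1 - (a + p) + p - 1) % p < p := Nat.mod_lt _ hp
  have h3 : T ≤ N + m + 1 - (a + p) + p - 1 := by
    rw [hT, hq]; exact Nat.div_mul_le_self _ _
  have hpq : p * q = T := by rw [hT, Nat.mul_comm]
  by_cases hD : N + m + 1 - (a + p) = 0
  · have hq0 : q = 0 := by
      rw [hq, hD]; exact Nat.div_eq_of_lt (by omega)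
    exact ⟨0, a - N, ⟨0, by simp⟩, by omega, by omega, by omega⟩
  · have hDT : N + m + 1 - (a + p) ≤ T := by omega
    exact ⟨T, a + T - N, ⟨q, hT⟩, by omega, by omega, by omega⟩

/-- If `u` has periodicity `p` (with `p ≥ 1`, as periodicities of strings are positive)
and `p ≤ min{|ov(v',u)|, |ov(u,u')|}`, then
`|ov(v',u')| > min{|ov(v',u)|, |ov(u,u')|} − p`. -/
theorem ov_gt_min_sub_period {α : Type*} [DecidableEq α] (u u' v' : List α) (p : ℕ)
    (hp : 0 < p) (hper : hasPeriod u p)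
    (hmin : p ≤ min (ovLen v' u) (ovLen u u')) :
    min (ovLen v' u) (ovLen u u') - p < ovLen v' u' := by
  obtain ⟨a, ha_def⟩ : ∃ a, a = ovLen v' u := ⟨_, rfl⟩
  obtain ⟨b, hb_def⟩ : ∃ b, b = ovLen u u' := ⟨_, rfl⟩
  rw [← ha_def, ← hb_def] at hmin ⊢
  have hPa : a ≤ u.length ∧ v'.drop (v'.length - a) = u.take a := by
    rw [ha_def]; unfold ovLen
    exact Nat.findGreatest_spec
      (P := fun k => k ≤ u.length ∧ v'.drop (v'.length - k) = u.take k)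
      (Nat.zero_le _) (by simp)
  have hPb : b ≤ u'.length ∧ u.drop (u.length - b) = u'.take b := by
    rw [hb_def]; unfold ovLen
    exact Nat.findGreatest_spec
      (P := fun k => k ≤ u'.length ∧ u.drop (u.length - k) = u'.take k)
      (Nat.zero_le _) (by simp)
  have hav : a ≤ v'.length := by
    rw [ha_def]; unfold ovLen; exact Nat.findGreatest_le _
  have hbu : b ≤ u.length := by
    rw [hb_def]; unfold ovLen; exact Nat.findGreatest_le _
  obtain ⟨hau, hova⟩ := hPa
  obtain ⟨hbu', hovb⟩ := hPb
  obtain ⟨m, hm⟩ : ∃ m, m = min a b := ⟨_, rfl⟩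
  obtain ⟨N, hN⟩ : ∃ N, N = u.length - b := ⟨_, rfl⟩
  have hpm : p ≤ m := by omega
  have hma : m ≤ a := by omega
  have hmb : m ≤ b := by omega
  have haNm : a ≤ N + m := by omega
  obtain ⟨T, k, ⟨t, hTt⟩, hNk, hkp, hkm⟩ := exists_T p a N m hp hpm hma haNm
  have hk1 : 1 ≤ k := by omega
  have hka : k ≤ a := by omega
  -- show k ≤ ovLen v' u'
  have hkey : k ≤ ovLen v' u' := by
    unfold ovLen
    apply Nat.le_findGreatest (le_trans hka hav)
    refine ⟨by omega, ?_⟩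
    apply List.ext_getElem?
    intro j
    rw [List.getElem?_drop, List.getElem?_take]
    by_cases hj : j < k
    · rw [if_pos hj]
      -- v'[|v'| - k + j] = u[a - k + j] = u[N + j] = u'[j]
      have hjk : a - k + j < a := by omega
      have e1 : v'.length - k + j = v'.length - a + (a - k + j) := by omega
      have e2 : v'[v'.length - a + (a - k + j)]? = u[a - k + j]? :=
        ov_elem hova hjk
      have e3 : u[a - k + j]? = u[(a - k + j) + T]? := by
        rw [hTt]
        apply hasPeriod_iter hper
        rw [← hTt]
        omega
      have e4 : (a - k + j) + T = N + j := by omega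
      have e5 : u[u.length - b + j]? = u'[j]? := ov_elem hovb (by omega)
      have e6 : u.length - b = N := hN.symm
      rw [e1, e2, e3, e4, ← e6, e5]
    · rw [if_neg hj]
      apply List.getElem?_eq_none
      omega
  omega
end

section
/- Edge-swap decrease of symmetric difference: Let C and C_i be two cycle covers (permutations) on the same finite vertex set, with C ≠ C_i. For any edge e = (u,v) ∈ C \ C_i, let f = (v',v) be the incoming edge of v in C_i and f' = (u,u') the outgoing edge of u in C_i, and form C_{i+1} = C_i ∪ {e, (v',u')} \ {f, f'}. Then C_{i+1} is again a cycle cover (every vertex has in-degree and out-degree one), f, f' ∉ C, and the symmetric difference |C_{i+1} Δ C| is strictly smaller than |C_i Δ C| (it decreases by 2 if (v',u') ∉ C and by 4 if (v',u') ∈ C). -/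
/-- The edge set of the cycle cover given by a permutation `π`:
the directed edges `(x, π x)` (self-loops allowed). -/
def edgeSet {V : Type*} [Fintype V] [DecidableEq V] (π : Equiv.Perm V) : Finset (V × V) :=
  Finset.univ.image fun x => (x, π x)

lemma mem_edgeSet {V : Type*} [Fintype V] [DecidableEq V] (π : Equiv.Perm V) (p : V × V) :
    p ∈ edgeSet π ↔ π p.1 = p.2 := by
  simp only [edgeSet, Finset.mem_image, Finset.mem_univ, true_and, Prod.ext_iff]
  aesop

lemma card_symmDiff_edgeSet {V : Type*} [Fintype V] [DecidableEq V] (π C : Equiv.Perm V) :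
    (symmDiff (edgeSet π) (edgeSet C)).card
      = 2 * (Finset.univ.filter fun x => π x ≠ C x).card := by
  have inj : ∀ (σ : Equiv.Perm V), Function.Injective (fun x : V => (x, σ x)) := by
    intro σ a b h
    exact congrArg Prod.fst h
  have hA : edgeSet π \ edgeSet C
      = (Finset.univ.filter fun x => π x ≠ C x).image (fun x => (x, π x)) := by
    ext ⟨a, b⟩
    simp only [Finset.mem_sdiff, mem_edgeSet, Finset.mem_image, Finset.mem_filter,
      Finset.mem_univ, true_and, Prod.mk.injEq]
    aesop
  have hB : edgeSet C \ edgeSet π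
      = (Finset.univ.filter fun x => π x ≠ C x).image (fun x => (x, C x)) := by
    ext ⟨a, b⟩
    simp only [Finset.mem_sdiff, mem_edgeSet, Finset.mem_image, Finset.mem_filter,
      Finset.mem_univ, true_and, Prod.mk.injEq]
    aesop
  rw [symmDiff_def, Finset.sup_eq_union,
    Finset.card_union_of_disjoint disjoint_sdiff_sdiff, hA, hB,
    Finset.card_image_of_injective _ (inj π), Finset.card_image_of_injective _ (inj C)]
  ring

/-- Edge-swap decrease of symmetric difference: let `C` and `Ci` be cycle covers
(permutations of a finite vertex set) and `e = (u,v) ∈ C \ Ci`. With `v' = Ci⁻¹ v`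
(so `f = (v',v) ∈ Ci`) and `u' = Ci u` (so `f' = (u,u') ∈ Ci`), the swap produces the
cycle cover `Ci' = Ci * swap u v'` (which contains `e = (u,v)` and `e' = (v',u')` and has
lost `f, f'`; being a permutation, it is again a cycle cover). Then `f, f' ∉ C`, and the
symmetric difference of edge sets with `C` decreases by 4 if `e' = (v',u') ∈ C` and by 2
otherwise; in particular it strictly decreases. -/
theorem edge_swap_decreases_symmDiff {V : Type*} [Fintype V] [DecidableEq V]
    (C Ci : Equiv.Perm V) (u v : V) (hC : C u = v) (hCi : Ci u ≠ v) :
    (Ci * Equiv.swap u (Ci⁻¹ v)) u = v ∧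
    (Ci * Equiv.swap u (Ci⁻¹ v)) (Ci⁻¹ v) = Ci u ∧
    (∀ x, x ≠ u → x ≠ Ci⁻¹ v → (Ci * Equiv.swap u (Ci⁻¹ v)) x = Ci x) ∧
    C (Ci⁻¹ v) ≠ v ∧
    C u ≠ Ci u ∧
    (symmDiff (edgeSet (Ci * Equiv.swap u (Ci⁻¹ v))) (edgeSet C)).card =
      (symmDiff (edgeSet Ci) (edgeSet C)).card - (if C (Ci⁻¹ v) = Ci u then 4 else 2) ∧
    (symmDiff (edgeSet (Ci * Equiv.swap u (Ci⁻¹ v))) (edgeSet C)).card <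
      (symmDiff (edgeSet Ci) (edgeSet C)).card := by
  set v' := Ci⁻¹ v with hv'
  have hCiv' : Ci v' = v := Ci.apply_symm_apply v
  have huv' : u ≠ v' := by
    intro h
    exact hCi (h ▸ hCiv')
  set Ci' := Ci * Equiv.swap u v' with hCi'
  have h1 : Ci' u = v := by
    simp [hCi', Equiv.swap_apply_left, hCiv']
  have h2 : Ci' v' = Ci u := by
    simp [hCi', Equiv.swap_apply_right]
  have h3 : ∀ x, x ≠ u → x ≠ v' → Ci' x = Ci x := by
    intro x hx1 hx2
    simp [hCi', Equiv.swap_apply_of_ne_of_ne hx1 hx2]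
  have h4 : C v' ≠ v := by
    intro h
    exact huv' (C.injective (hC.trans h.symm))
  have h5 : C u ≠ Ci u := fun h => hCi (h.symm.trans hC)
  refine ⟨h1, h2, h3, h4, h5, ?_⟩
  set S := Finset.univ.filter fun x => Ci x ≠ C x with hS
  set S' := Finset.univ.filter fun x => Ci' x ≠ C x with hS'
  have huS : u ∈ S := by
    simp only [hS, Finset.mem_filter, Finset.mem_univ, true_and]
    exact fun h => h5 h.symm
  have hv'S : v' ∈ S := by
    simp only [hS, Finset.mem_filter, Finset.mem_univ, true_and]
    rw [hCiv']
    exact fun h => h4 h.symm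
  rw [card_symmDiff_edgeSet, card_symmDiff_edgeSet, ← hS, ← hS']
  by_cases hcase : C v' = Ci u
  · have hSeq : S' = (S.erase u).erase v' := by
      ext x
      simp only [hS', hS, Finset.mem_filter, Finset.mem_univ, true_and, Finset.mem_erase]
      by_cases hxu : x = u
      · subst hxu
        simp [h1, hC, huv']
      · by_cases hxv' : x = v'
        · subst hxv'
          simp [h2, hcase, hxu]
        · simp [h3 x hxu hxv', hxu, hxv']
    have hv'e : v' ∈ S.erase u := Finset.mem_erase.mpr ⟨fun h => huv' h.symm, hv'S⟩
    rw [hSeq, Finset.card_erase_of_mem hv'e, Finset.card_erase_of_mem huS, if_pos hcase]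
    have h2le : 2 ≤ S.card := by
      have := Finset.card_le_card (Finset.insert_subset huS (Finset.singleton_subset_iff.mpr hv'S) : ({u, v'} : Finset V) ⊆ S)
      rwa [Finset.card_insert_of_notMem (by simp [huv']), Finset.card_singleton] at this
    omega
  · have hSeq : S' = S.erase u := by
      ext x
      simp only [hS', hS, Finset.mem_filter, Finset.mem_univ, true_and, Finset.mem_erase]
      by_cases hxu : x = u
      · subst hxu
        simp [h1, hC, huv']
      · by_cases hxv' : x = v'
        · subst hxv'
          simp [h2, hCiv', hxu]
          constructor
          · exact fun _ h => h4 h.symm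
          · exact fun _ h => hcase h.symm
        · simp [h3 x hxu hxv', hxu, hxv']
    have h1le : 1 ≤ S.card := Finset.card_pos.mpr ⟨u, huS⟩
    rw [hSeq, Finset.card_erase_of_mem huS, if_neg hcase]
    omega
end

section
/- Concatenation periodicity bound: if a nonempty string h satisfies |h| ≥ a + b, has periodicity a, and has periodicity b, then it has periodicity gcd(a,b); consequently, if two words x1 (|x1| = a) and x2 (|x2| = b) both have h as a prefix of x1^∞ and x2^∞ respectively and |h| ≥ a + b, then x1 x2 = x2 x1. -/
/-- `h` is a prefix of `x^∞`. -/
def isPrefixInf {α : Type*} (h x : List α) : Prop :=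
  ∀ i < h.length, h[i]? = infWordO x i

lemma period_sub {α : Type*} (h : List α) (a b : ℕ) (hab : a ≤ b)
    (hpa : hasPeriod h a) (hpb : hasPeriod h b) (hlen : a + b ≤ h.length) :
    hasPeriod h (b - a) := by
  intro i hi
  by_cases hc : i + b < h.length
  · have hba : b - a + a = b := Nat.sub_add_cancel hab
    have h1 := hpb i hc
    have h2 := hpa (i + (b - a)) (by omega)
    rw [h1, h2]; congr 1; omega
  · have ha : a ≤ i := by omega
    have e1 : h[i - a]? = h[i]? := by
      have := hpa (i - a) (by omega); rwa [show i - a + a = i by omega] at this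
    have e2 : h[i - a]? = h[i + (b - a)]? := by
      have := hpb (i - a) (by omega); rwa [show i - a + b = i + (b - a) by omega] at this
    rw [← e1, e2]

lemma period_gcd {α : Type*} (n : ℕ) : ∀ (h : List α) (a b : ℕ), a + b ≤ n →
    hasPeriod h a → hasPeriod h b → a + b ≤ h.length → hasPeriod h (Nat.gcd a b) := by
  induction n using Nat.strong_induction_on with
  | _ n ih =>
    intro h a b hn hpa hpb hlen
    rcases Nat.eq_zero_or_pos a with rfl | hapos
    · simpa using hpb
    rcases Nat.eq_zero_or_pos b with rfl | hbpos
    · simpa using hpa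
    rcases lt_trichotomy a b with hlt | rfl | hgt
    · have hsub := period_sub h a b hlt.le hpa hpb (by omega)
      have := ih b (by omega) h a (b - a) (by omega) hpa hsub (by omega)
      rwa [Nat.gcd_sub_self_right hlt.le] at this
    · simpa [Nat.gcd_self] using hpa
    · have hsub := period_sub h b a hgt.le hpb hpa (by omega)
      have := ih a (by omega) h b (a - b) (by omega) hpb hsub (by omega)
      rwa [Nat.gcd_sub_self_right hgt.le, Nat.gcd_comm] at this

/-- Fine–Wilf style theorem: if a nonempty string `h` with `|h| ≥ a + b` has periodicities
`a` and `b`, then it has periodicity `gcd a b`; consequently, if words `x1` (of length `a`)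
and `x2` (of length `b`) both have `h` as a prefix of `x1^∞` resp. `x2^∞`, then
`x1 x2 = x2 x1`. -/
theorem periodicity_gcd_and_comm {α : Type*} (h : List α) (a b : ℕ) (hne : h ≠ [])
    (hpa : hasPeriod h a) (hpb : hasPeriod h b) (hlen : a + b ≤ h.length) :
    hasPeriod h (Nat.gcd a b) ∧
    ∀ x1 x2 : List α, x1.length = a → x2.length = b → x1 ≠ [] → x2 ≠ [] →
      isPrefixInf h x1 → isPrefixInf h x2 → x1 ++ x2 = x2 ++ x1 := by
  constructor
  · exact period_gcd (a + b) h a b le_rfl hpa hpb hlen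
  · intro x1 x2 hx1 hx2 hne1 hne2 hp1 hp2
    have ha : 0 < a := by
      have := List.length_pos_iff.mpr hne1; omega
    have hb : 0 < b := by
      have := List.length_pos_iff.mpr hne2; omega
    have key1 : ∀ j, j < a → x1[j]? = h[j]? := by
      intro j hj
      have := hp1 j (by omega)
      rw [this, infWordO, hx1, Nat.mod_eq_of_lt hj]
    have key2 : ∀ j, j < b → x2[j]? = h[j]? := by
      intro j hj
      have := hp2 j (by omega)
      rw [this, infWordO, hx2, Nat.mod_eq_of_lt hj]
    apply List.ext_getElem?
    intro i
    by_cases hi : i < a + b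
    · have lhs : (x1 ++ x2)[i]? = h[i]? := by
        by_cases hia : i < a
        · rw [List.getElem?_append, if_pos (by omega), key1 i hia]
        · rw [List.getElem?_append, if_neg (by omega), hx1, key2 (i - a) (by omega)]
          have := hpa (i - a) (by omega)
          rw [this]; congr 1; omega
      have rhs : (x2 ++ x1)[i]? = h[i]? := by
        by_cases hib : i < b
        · rw [List.getElem?_append, if_pos (by omega), key2 i hib]
        · rw [List.getElem?_append, if_neg (by omega), hx2, key1 (i - b) (by omega)]
          have := hpb (i - b) (by omega)
          rw [this]; congr 1; omega
      rw [lhs, rhs]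
    · rw [List.getElem?_eq_none (by simp [hx1, hx2]; omega),
          List.getElem?_eq_none (by simp [hx1, hx2]; omega)]
end

section
/- Superstring-to-Hamiltonian-cycle bound: Let S = {s_1, …, s_m} be a set of strings, none a substring of another, with m ≥ 2. If σ is a superstring of S of length n, then in the complete directed distance graph G_dist(S) (edge weights dist(s,t) = |s| − |ov(s,t)|) there exists a Hamiltonian cycle of total weight at most n. In particular, the minimum weight w of a cycle cover of G_dist(S) satisfies w ≤ n. -/
private lemma distL_le_sub {α : Type*} [DecidableEq α] {σ s t : List α} {a b : ℕ}
    (hab : a ≤ b)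
    (hs : s = (σ.drop a).take s.length) (ht : t = (σ.drop b).take t.length)
    (he : a + s.length ≤ b + t.length) : distL s t ≤ b - a := by
  rcases le_or_gt (a + s.length) b with h | h
  · calc distL s t ≤ s.length := Nat.sub_le _ _
      _ ≤ b - a := by omega
  · set k := a + s.length - b with hk
    have hk1 : k ≤ t.length := by omega
    have hk2 : k ≤ s.length := by omega
    have hdrop : s.length - k = b - a := by omega
    have h2 : s.drop (s.length - k) = t.take k := by
      rw [hdrop]
      conv_lhs => rw [hs]
      conv_rhs => rw [ht]
      rw [List.drop_take, List.drop_drop, List.take_take,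
        min_eq_left hk1, show a + (b - a) = b by omega, show s.length - (b - a) = k by omega]
    have hov : k ≤ ovLen s t := Nat.le_findGreatest hk2 ⟨hk1, h2⟩
    have hle : ovLen s t ≤ s.length := Nat.findGreatest_le _
    show s.length - ovLen s t ≤ b - a
    omega

private lemma infix_aux {α : Type*} {σ s t : List α} {a b : ℕ} (hab : a ≤ b)
    (hs : s = (σ.drop a).take s.length) (ht : t = (σ.drop b).take t.length)
    (he : b + t.length ≤ a + s.length) : t <:+: s := by
  have h2 : t = (s.drop (b - a)).take t.length := by
    conv_rhs => rw [hs]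
    rw [List.drop_take, List.drop_drop, List.take_take,
      min_eq_left (show t.length ≤ s.length - (b - a) by omega),
      show a + (b - a) = b by omega]
    exact ht
  rw [h2]
  exact (List.take_prefix _ _).isInfix.trans (List.drop_suffix _ _).isInfix

private def permCongrMulEquiv {β γ : Type*} (e : β ≃ γ) : Equiv.Perm β ≃* Equiv.Perm γ :=
  { e.permCongr with
    map_mul' := fun p q => by
      ext x
      simp [Equiv.permCongr_apply, Equiv.Perm.mul_apply] }

private lemma isCycle_permCongr {β γ : Type*} (e : β ≃ γ) {p : Equiv.Perm β}
    (hp : p.IsCycle) : (e.permCongr p).IsCycle := by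
  obtain ⟨x, hx, hall⟩ := hp
  refine ⟨e x, by simpa using fun h => hx (e.injective h), fun y hy => ?_⟩
  have hy' : p (e.symm y) ≠ e.symm y := by
    intro h
    apply hy
    simp only [Equiv.permCongr_apply, h, Equiv.apply_symm_apply]
  obtain ⟨n, hn⟩ := hall hy'
  refine ⟨n, ?_⟩
  have key : (e.permCongr p) ^ n = e.permCongr (p ^ n) := by
    have := map_zpow (permCongrMulEquiv e) p n
    exact this.symm
  rw [key]
  simp only [Equiv.permCongr_apply, Equiv.symm_apply_apply]
  rw [hn]
  exact e.apply_symm_apply y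

/-- Superstring-to-Hamiltonian-cycle bound: let `S` be a set of at least two strings, none
a substring of another, and let `σ` be a superstring of `S` of length `n`. Then the
distance graph on `S` has a Hamiltonian cycle (a cyclic permutation `π` of `S`) of total
weight at most `n`. In particular the minimum weight of a cycle cover of `G_dist(S)` is
at most `n`. -/
theorem superstring_hamiltonian_cycle {α : Type*} [DecidableEq α]
    (S : Finset (List α)) (hm : 2 ≤ S.card)
    (hsub : ∀ s ∈ S, ∀ t ∈ S, s ≠ t → ¬ s <:+: t)
    (σ : List α) (hσ : ∀ s ∈ S, s <:+: σ) :
    ∃ π : Equiv.Perm {x : List α // x ∈ S}, π.IsCycle ∧ (∀ x, π x ≠ x) ∧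
      ∑ x : {x : List α // x ∈ S}, distL (x : List α) ((π x : {x : List α // x ∈ S}) : List α)
        ≤ σ.length := by
  classical
  have hocc : ∀ x : {x : List α // x ∈ S}, ∃ a : ℕ,
      (x : List α) = (σ.drop a).take (x : List α).length ∧
        a + (x : List α).length ≤ σ.length := by
    intro x
    obtain ⟨l, r, hlr⟩ := hσ x x.2
    refine ⟨l.length, ?_, ?_⟩
    · rw [← hlr, List.append_assoc, List.drop_left, List.take_left]
    · rw [← hlr]
      simp [List.length_append]
  choose B hB1 hB2 using hocc
  have key : ∀ x y : {x : List α // x ∈ S}, x ≠ y → B x ≤ B y →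
      B x + (x : List α).length < B y + (y : List α).length := by
    intro x y hxy hle
    by_contra hcon
    push_neg at hcon
    have hinf : (y : List α) <:+: (x : List α) :=
      infix_aux hle (hB1 x) (hB1 y) hcon
    have hne : (y : List α) ≠ (x : List α) := fun h => hxy (Subtype.ext h.symm)
    exact hsub _ y.2 _ x.2 hne hinf
  have hBinj : Function.Injective B := by
    intro x y h
    by_contra hne
    have h1 := key x y hne h.le
    have h2 := key y x (Ne.symm hne) h.ge
    omega
  letI : LinearOrder {x : List α // x ∈ S} := LinearOrder.lift' B hBinj
  obtain ⟨m', hm'⟩ : ∃ m', S.card = m' + 2 := ⟨S.card - 2, by omega⟩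
  have hcard : Fintype.card {x : List α // x ∈ S} = m' + 2 :=
    (Fintype.card_coe S).trans hm'
  let e := monoEquivOfFin {x : List α // x ∈ S} hcard
  have heB : ∀ i j : Fin (m' + 2), i < j → B (e i) < B (e j) := by
    intro i j hij
    have h1 : e i < e j := e.strictMono hij
    have hle : B (e i) ≤ B (e j) := h1.le
    exact lt_of_le_of_ne hle fun h => hij.ne (e.injective (hBinj h))
  let π : Equiv.Perm {x : List α // x ∈ S} := Equiv.permCongr e.toEquiv (finRotate (m' + 2))
  have hπ : ∀ x, π x = e (e.symm x + 1) := by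
    intro x
    simp [π, Equiv.permCongr_apply, finRotate_succ_apply]
  refine ⟨π, isCycle_permCongr _ isCycle_finRotate, ?_, ?_⟩
  · intro x h
    rw [hπ x] at h
    have h2 : e.symm x + 1 = e.symm x := by
      have := e.injective (h.trans (e.apply_symm_apply x).symm)
      exact this
    have h3 := congrArg Fin.val h2
    rcases eq_or_ne (e.symm x) (Fin.last (m' + 1)) with hl | hl
    · rw [hl, Fin.last_add_one] at h2
      have := congrArg Fin.val h2
      simp [Fin.last] at this
    · rw [Fin.val_add_one_of_lt (Fin.lt_last_iff_ne_last.mpr hl)] at h3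
      omega
  · have hsum : ∑ x : {x : List α // x ∈ S},
        distL (x : List α) ((π x : {x : List α // x ∈ S}) : List α)
        = ∑ i : Fin (m' + 2), distL ((e i : {x : List α // x ∈ S}) : List α)
            ((e (i + 1) : {x : List α // x ∈ S}) : List α) := by
      rw [← Equiv.sum_comp e.toEquiv
        (fun x => distL (x : List α) ((π x : {x : List α // x ∈ S}) : List α))]
      refine Finset.sum_congr rfl fun i _ => ?_
      rw [hπ]
      simp
    rw [hsum, Fin.sum_univ_castSucc]
    set h : Fin (m' + 2) → ℕ := fun i => B (e i) with hh
    set H : ℕ → ℕ := fun n => B (e ⟨min n (m' + 1), by omega⟩) with hH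
    have hHmono : Monotone H := by
      intro n n' hnn
      dsimp [H]
      rcases eq_or_lt_of_le (show min n (m' + 1) ≤ min n' (m' + 1) by omega) with h | h
      · have heq : (⟨min n (m' + 1), by omega⟩ : Fin (m' + 2)) = ⟨min n' (m' + 1), by omega⟩ :=
          Fin.ext h
        rw [heq]
      · exact (heB _ _ h).le
    have hterm : ∀ i : Fin (m' + 1),
        distL ((e i.castSucc : {x : List α // x ∈ S}) : List α)
          ((e (i.castSucc + 1) : {x : List α // x ∈ S}) : List α)
          ≤ H (i.val + 1) - H i.val := by
      intro i
      rw [Fin.coeSucc_eq_succ]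
      have hne : e i.castSucc ≠ e i.succ :=
        fun hcon => (Fin.castSucc_lt_succ : i.castSucc < i.succ).ne (e.injective hcon)
      have hlt : B (e i.castSucc) < B (e i.succ) := heB _ _ (Fin.castSucc_lt_succ : i.castSucc < i.succ)
      have hk := key _ _ hne hlt.le
      have hd := distL_le_sub hlt.le (hB1 (e i.castSucc)) (hB1 (e i.succ)) hk.le
      have h1 : H i.val = B (e i.castSucc) := by
        have heq : (⟨min i.val (m' + 1), by omega⟩ : Fin (m' + 2)) = i.castSucc :=
          Fin.ext (by simp)
        dsimp [H]
        rw [heq]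
      have h2 : H (i.val + 1) = B (e i.succ) := by
        have heq : (⟨min (i.val + 1) (m' + 1), by omega⟩ : Fin (m' + 2)) = i.succ :=
          Fin.ext (by simp; omega)
        dsimp [H]
        rw [heq]
      rw [h1, h2]
      exact hd
    have hsum2 : ∑ i : Fin (m' + 1), (H (i.val + 1) - H i.val)
        = H (m' + 1) - H 0 := by
      rw [Fin.sum_univ_eq_sum_range (fun n => H (n + 1) - H n)]
      exact Finset.sum_range_tsub hHmono _
    have hH1 : H (m' + 1) = B (e (Fin.last (m' + 1))) := by
      have heq : (⟨min (m' + 1) (m' + 1), by omega⟩ : Fin (m' + 2)) = Fin.last (m' + 1) :=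
        Fin.ext (by simp)
      dsimp [H]
      rw [heq]
    have hb := hB2 (e (Fin.last (m' + 1)))
    have hlast : distL ((e (Fin.last (m' + 1)) : {x : List α // x ∈ S}) : List α)
        ((e (Fin.last (m' + 1) + 1) : {x : List α // x ∈ S}) : List α)
        ≤ σ.length - H (m' + 1) := by
      calc distL ((e (Fin.last (m' + 1)) : {x : List α // x ∈ S}) : List α)
            ((e (Fin.last (m' + 1) + 1) : {x : List α // x ∈ S}) : List α)
          ≤ ((e (Fin.last (m' + 1)) : {x : List α // x ∈ S}) : List α).length := Nat.sub_le _ _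
        _ ≤ σ.length - H (m' + 1) := by omega
    have hs1 : ∑ i : Fin (m' + 1),
        distL ((e i.castSucc : {x : List α // x ∈ S}) : List α)
          ((e (i.castSucc + 1) : {x : List α // x ∈ S}) : List α)
        ≤ H (m' + 1) - H 0 := by
      rw [← hsum2]
      exact Finset.sum_le_sum fun i _ => hterm i
    omega
end
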